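/- Let F : ℝ^d → [F̲, F̄] be globally Lipschitz, bounded and strictly positive (0 < F̲ ≤ F̄), and let C_F := (1/F̲)(1 + F̄/F̲)(Lip(F) + 2F̄). Then for any probability measures f, g on ℝ^d, ‖Q⁺(f,f) − Q⁺(g,g)‖_BL ≤ 2 ‖F f/⟨F,f⟩ − F g/⟨F,g⟩‖_BL ≤ 2 C_F ‖f − g‖_BL. -/

import Mathlib

open MeasureTheory ProbabilityTheory Set
open scoped ENNReal NNReal

noncomputable section

/-- `ℝ^d` with the Euclidean norm. -/
abbrev Euc (d : ℕ) := EuclideanSpace ℝ (Fin d)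

/-- The standard Gaussian measure `N(0, I_d)` on `ℝ^d`. -/
def stdGaussian (d : ℕ) : Measure (Euc d) :=
  (Measure.pi fun _ : Fin d => gaussianReal 0 1).map
    (MeasurableEquiv.toLp 2 (Fin d → ℝ))

/-- The uniform probability measure on the cube `[0,1]^d`. -/
def unifCube (d : ℕ) : Measure (Euc d) :=
  (Measure.pi fun _ : Fin d => volume.restrict (Set.Icc (0:ℝ) 1)).map
    (MeasurableEquiv.toLp 2 (Fin d → ℝ))

/-- The uniform probability measure on `[0,N)`. -/
def unifIco (N : ℕ) : Measure ℝ :=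
  ((N : ℝ≥0∞))⁻¹ • volume.restrict (Set.Ico (0:ℝ) (N:ℝ))

/-- The Bernoulli measure `(1-τ)δ₀ + τδ₁` on `ℝ`. -/
def bern (τ : ℝ) : Measure ℝ :=
  ENNReal.ofReal (1 - τ) • Measure.dirac (0:ℝ) + ENNReal.ofReal τ • Measure.dirac 1

/-- Crossover-mutation update: `x' = (1-γ)⊙x + γ⊙x* + σξ` (componentwise product). -/
def crossover {d : ℕ} (γ ξ : Euc d) (σ : ℝ) (x xs : Euc d) : Euc d :=
  WithLp.toLp 2 fun i => (1 - γ i) * x i + γ i * xs i + σ * ξ i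

/-- The reweighted probability measure `F f / ⟨F, f⟩`. -/
def reweight {d : ℕ} (F : Euc d → ℝ) (f : Measure (Euc d)) : Measure (Euc d) :=
  f.withDensity fun x => ENNReal.ofReal (F x / ∫ y, F y ∂f)

/-- The gain operator `Q⁺(f,f)`: the law of `(1-γ)⊙x + γ⊙x* + σξ` where `x, x*` are
independent with law `F f/⟨F,f⟩`, `γ ~ Unif[0,1]^d` and `ξ ~ N(0,I_d)`. -/
def Qplus {d : ℕ} (F : Euc d → ℝ) (σ : ℝ) (f : Measure (Euc d)) : Measure (Euc d) :=
  ((((reweight F f).prod (reweight F f)).prod ((unifCube d).prod (stdGaussian d))).map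
    fun p => crossover p.2.1 p.2.2 σ p.1.1 p.1.2)

/-- Bounded-Lipschitz (BL) norm of `f - g`:
`sup {∫φ df - ∫φ dg : Lip(φ) ≤ 1, ‖φ‖_∞ ≤ 1/2}`. -/
def blDist {d : ℕ} (f g : Measure (Euc d)) : ℝ :=
  sSup {r | ∃ φ : Euc d → ℝ, LipschitzWith 1 φ ∧ (∀ x, |φ x| ≤ 1/2) ∧
    r = (∫ x, φ x ∂f) - ∫ x, φ x ∂g}

/-- `W₁^∧(f,g)`: Wasserstein-1 distance with truncated cost `min(|x-y|,1)`. -/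
def W1trunc {d : ℕ} (f g : Measure (Euc d)) : ℝ :=
  sInf {r | ∃ pl : Measure (Euc d × Euc d), IsProbabilityMeasure pl ∧
    pl.map Prod.fst = f ∧ pl.map Prod.snd = g ∧
    r = ∫ z, min (dist z.1 z.2) 1 ∂pl}

/-- `W₁(f,g)`: Wasserstein-1 distance with cost `|x-y|`. -/
def W1 {d : ℕ} (f g : Measure (Euc d)) : ℝ :=
  sInf {r | ∃ pl : Measure (Euc d × Euc d), IsProbabilityMeasure pl ∧
    pl.map Prod.fst = f ∧ pl.map Prod.snd = g ∧
    r = ∫ z, dist z.1 z.2 ∂pl}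

/-- The Fournier–Guillin rate `ε₁(N)`. -/
def rate (d N : ℕ) : ℝ :=
  if d = 1 then (N : ℝ) ^ (-(1/2 : ℝ))
  else if d = 2 then (N : ℝ) ^ (-(1/2 : ℝ)) * Real.log (1 + N)
  else (N : ℝ) ^ (-(1 / (d : ℝ)))

/-- The `q`-th moment `M_q(f) = ∫ |x|^q f(dx)`. -/
def Mq {d : ℕ} (q : ℝ) (f : Measure (Euc d)) : ℝ := ∫ x, ‖x‖ ^ q ∂f

/-- Moment assumption on `q`: `q > 2` for `d ≤ 2`, `q ≥ d/(d-1)` for `d > 2`. -/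
def momentCond (d : ℕ) (q : ℝ) : Prop :=
  (d ≤ 2 → 2 < q) ∧ (2 < d → (d : ℝ) / ((d : ℝ) - 1) ≤ q)

/-- Index map `j(w,α) := min { j : α < N ∑_{ℓ ≤ j} w^ℓ }`. -/
def idxMap {N : ℕ} (hN : 0 < N) (w : Fin N → ℝ) (α : ℝ) : Fin N :=
  if h : (Finset.univ.filter fun j : Fin N => α < N * ∑ ℓ ∈ Finset.Iic j, w ℓ).Nonempty
  then (Finset.univ.filter fun j : Fin N => α < N * ∑ ℓ ∈ Finset.Iic j, w ℓ).min' h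
  else ⟨0, hN⟩

/-- Fitness-proportional weights `w^i = F(x^i)/∑_ℓ F(x^ℓ)`. -/
def gaWeights {d N : ℕ} (F : Euc d → ℝ) (x : Fin N → Euc d) : Fin N → ℝ :=
  fun i => F (x i) / ∑ ℓ, F (x ℓ)

/-- Empirical measure `(1/N) ∑ δ_{x^i}`. -/
def empMeas {d N : ℕ} (x : Fin N → Euc d) : Measure (Euc d) :=
  ((N : ℝ≥0∞))⁻¹ • ∑ i, Measure.dirac (x i)

/-- Weighted empirical measure `∑ w^i δ_{x^i}`. -/
def wEmpMeas {d N : ℕ} (w : Fin N → ℝ) (x : Fin N → Euc d) : Measure (Euc d) :=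
  ∑ i, ENNReal.ofReal (w i) • Measure.dirac (x i)

/-!
Both `Q⁺(f,f)` and `Q⁺(g,g)` integrate a test function `φ` through the kernel
`Ψ(x, x*) = E[φ((1-γ)⊙x + γ⊙x* + σξ)]`, which is bounded by `1/2` and, because `γ ∈ [0,1]^d`,
`1`-Lipschitz in each of `x`, `x*` separately. Exchanging the two factors of the product
measure one at a time therefore costs at most `2 ‖Ff/⟨F,f⟩ - Fg/⟨F,g⟩‖_BL`. For the second
inequality write `∫ φ d(Ff/⟨F,f⟩) = ⟨Fφ, f⟩/⟨F, f⟩`: after rescaling, `Fφ` and `F` are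
admissible test functions, and `⟨F, ·⟩ ≥ F̲` keeps the quotient Lipschitz.
-/

lemma lipschitzWith_integral {α X : Type*} [PseudoMetricSpace α] [MeasurableSpace X]
    {μ : Measure X} [IsProbabilityMeasure μ] {K : ℝ≥0} {Φ : α → X → ℝ}
    (hint : ∀ a, Integrable (Φ a) μ) (hlip : ∀ᵐ y ∂μ, LipschitzWith K fun a => Φ a y) :
    LipschitzWith K fun a => ∫ y, Φ a y ∂μ :=
  LipschitzWith.of_dist_le_mul fun a b => by
    rw [dist_eq_norm, ← integral_sub (hint a) (hint b)]
    simpa using norm_integral_le_of_norm_le_const (f := fun y => Φ a y - Φ b y)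
      (hlip.mono fun y hy => by simpa [dist_eq_norm] using hy.dist_le_mul a b)

section Integral

variable {α : Type*} [MeasurableSpace α] {μ : Measure α}

lemma abs_integral_le_of_abs_le [IsProbabilityMeasure μ] {h : α → ℝ} {C : ℝ}
    (hb : ∀ x, |h x| ≤ C) : |∫ x, h x ∂μ| ≤ C := by
  simpa using norm_integral_le_of_norm_le_const (μ := μ) (f := h) (ae_of_all _ hb)

lemma integrable_of_abs_le [IsFiniteMeasure μ] {h : α → ℝ} (hm : AEStronglyMeasurable h μ)
    {C : ℝ} (hb : ∀ x, |h x| ≤ C) : Integrable h μ :=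
  .of_bound hm C (ae_of_all _ hb)

lemma integrable_of_mem_Icc [IsFiniteMeasure μ] {F : α → ℝ} {m M : ℝ} (hF : Measurable F)
    (hFmem : ∀ x, F x ∈ Icc m M) : Integrable F μ :=
  integrable_of_abs_le hF.aestronglyMeasurable fun x => abs_le_max_abs_abs (hFmem x).1 (hFmem x).2

lemma integral_mem_Icc_of_mem_Icc [IsProbabilityMeasure μ] {F : α → ℝ} {m M : ℝ}
    (hF : Measurable F) (hFmem : ∀ x, F x ∈ Icc m M) : ∫ x, F x ∂μ ∈ Icc m M := by
  have hint : Integrable F μ := integrable_of_mem_Icc hF hFmem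
  exact ⟨by simpa using integral_mono (integrable_const m) hint fun x => (hFmem x).1,
    by simpa using integral_mono hint (integrable_const M) fun x => (hFmem x).2⟩

end Integral

lemma abs_div_sub_div_le {A B a b m M : ℝ} (hm : 0 < m) (ha : m ≤ a) (hb : m ≤ b)
    (hbM : b ≤ M) (hB : |B| ≤ M / 2) :
    |A / a - B / b| ≤ (M * |A - B| + M / 2 * |a - b|) / m ^ 2 := by
  have ha0 : 0 < a := hm.trans_le ha
  have hb0 : 0 < b := hm.trans_le hb
  have hnum : |(A - B) * b + B * (b - a)| ≤ M * |A - B| + M / 2 * |a - b| := by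
    calc |(A - B) * b + B * (b - a)| ≤ |A - B| * |b| + |B| * |b - a| := by
          simpa only [abs_mul] using abs_add_le ((A - B) * b) (B * (b - a))
      _ ≤ |A - B| * M + M / 2 * |a - b| := by
          rw [abs_of_pos hb0, abs_sub_comm b]
          gcongr
      _ = M * |A - B| + M / 2 * |a - b| := by ring
  calc |A / a - B / b| = |(A - B) * b + B * (b - a)| / (a * b) := by
        rw [div_sub_div _ _ ha0.ne' hb0.ne', abs_div, abs_of_pos (mul_pos ha0 hb0)]
        ring_nf
    _ ≤ (M * |A - B| + M / 2 * |a - b|) / (a * b) := by gcongr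
    _ ≤ (M * |A - B| + M / 2 * |a - b|) / m ^ 2 := by
        gcongr
        · exact (abs_nonneg _).trans hnum
        · rw [sq]; exact mul_le_mul ha hb hm.le ha0.le

section BoundedLipschitz

variable {d : ℕ}

lemma bddAbove_blDist_set (f g : Measure (Euc d)) [IsProbabilityMeasure f]
    [IsProbabilityMeasure g] :
    BddAbove {r | ∃ φ : Euc d → ℝ, LipschitzWith 1 φ ∧ (∀ x, |φ x| ≤ 1/2) ∧
      r = (∫ x, φ x ∂f) - ∫ x, φ x ∂g} := by
  refine ⟨1, ?_⟩
  rintro r ⟨φ, -, hbd, rfl⟩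
  have hf := abs_le.1 (abs_integral_le_of_abs_le (μ := f) hbd)
  have hg := abs_le.1 (abs_integral_le_of_abs_le (μ := g) hbd)
  linarith [hf.2, hg.1]

lemma le_blDist {f g : Measure (Euc d)} [IsProbabilityMeasure f] [IsProbabilityMeasure g]
    {φ : Euc d → ℝ} (hlip : LipschitzWith 1 φ) (hbd : ∀ x, |φ x| ≤ 1/2) :
    (∫ x, φ x ∂f) - ∫ x, φ x ∂g ≤ blDist f g :=
  le_csSup (bddAbove_blDist_set f g) ⟨φ, hlip, hbd, rfl⟩

lemma blDist_nonneg (f g : Measure (Euc d)) [IsProbabilityMeasure f] [IsProbabilityMeasure g] :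
    0 ≤ blDist f g := by
  simpa using le_blDist (f := f) (g := g) (φ := fun _ => 0) (LipschitzWith.const' 0)
    (fun _ => by norm_num)

lemma abs_le_blDist {f g : Measure (Euc d)} [IsProbabilityMeasure f] [IsProbabilityMeasure g]
    {φ : Euc d → ℝ} (hlip : LipschitzWith 1 φ) (hbd : ∀ x, |φ x| ≤ 1/2) :
    |(∫ x, φ x ∂f) - ∫ x, φ x ∂g| ≤ blDist f g := by
  have hneg := le_blDist (f := f) (g := g) hlip.neg (fun x => by simpa using hbd x)
  simp only [Pi.neg_apply, integral_neg] at hneg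
  exact abs_le.2 ⟨by linarith, le_blDist hlip hbd⟩

lemma blDist_le {f g : Measure (Euc d)} {C : ℝ} (hC : 0 ≤ C)
    (h : ∀ φ : Euc d → ℝ, LipschitzWith 1 φ → (∀ x, |φ x| ≤ 1/2) →
      (∫ x, φ x ∂f) - ∫ x, φ x ∂g ≤ C) : blDist f g ≤ C :=
  Real.sSup_le (by rintro r ⟨φ, h1, h2, rfl⟩; exact h φ h1 h2) hC

/-- The shift by `c` is harmless because `f` and `g` have the same mass. -/
lemma abs_integral_sub_le_mul_blDist {f g : Measure (Euc d)} [IsProbabilityMeasure f]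
    [IsProbabilityMeasure g] {ψ : Euc d → ℝ} {K c : ℝ} (hK : 0 < K)
    (hlip : ∀ x y, |ψ x - ψ y| ≤ K * dist x y) (hbd : ∀ x, |ψ x - c| ≤ K / 2) :
    |(∫ x, ψ x ∂f) - ∫ x, ψ x ∂g| ≤ K * blDist f g := by
  set τ : Euc d → ℝ := fun x => (ψ x - c) / K
  have hτlip : LipschitzWith 1 τ := LipschitzWith.of_dist_le_mul fun x y => by
    rw [Real.dist_eq, NNReal.coe_one, one_mul, ← sub_div, abs_div, abs_of_pos hK,
      div_le_iff₀ hK, sub_sub_sub_cancel_right, mul_comm]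
    exact hlip x y
  have hτbd : ∀ x, |τ x| ≤ 1/2 := fun x => by
    rw [abs_div, abs_of_pos hK, div_le_iff₀ hK]; linarith [hbd x]
  have hτint : ∀ μ : Measure (Euc d), [IsProbabilityMeasure μ] → Integrable τ μ := fun _ _ =>
    integrable_of_abs_le hτlip.continuous.aestronglyMeasurable hτbd
  have hψ : ψ = fun x => K * τ x + c := funext fun x => by simp only [τ]; field_simp; ring
  have hint : ∀ μ : Measure (Euc d), [IsProbabilityMeasure μ] →
      ∫ x, ψ x ∂μ = K * ∫ x, τ x ∂μ + c := fun μ _ => by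
    rw [hψ, integral_add ((hτint μ).const_mul K) (integrable_const c), integral_const_mul]
    simp
  rw [hint f, hint g, add_sub_add_right_eq_sub, ← mul_sub, abs_mul, abs_of_pos hK]
  exact mul_le_mul_of_nonneg_left (abs_le_blDist hτlip hτbd) hK.le

lemma integral_prod_self_sub_le_two_mul_blDist {μ ν : Measure (Euc d)} [IsProbabilityMeasure μ]
    [IsProbabilityMeasure ν] {Ψ : Euc d × Euc d → ℝ} (hbd : ∀ q, |Ψ q| ≤ 1/2)
    (hlip₁ : ∀ y, LipschitzWith 1 fun x => Ψ (x, y))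
    (hlip₂ : ∀ x, LipschitzWith 1 fun y => Ψ (x, y)) :
    (∫ q, Ψ q ∂(μ.prod μ)) - ∫ q, Ψ q ∂(ν.prod ν) ≤ 2 * blDist μ ν := by
  have hΨ : Continuous Ψ := (LipschitzWith.uncurry hlip₁ hlip₂).continuous
  have hint : ∀ ρ : Measure (Euc d × Euc d), [IsProbabilityMeasure ρ] → Integrable Ψ ρ :=
    fun _ _ => integrable_of_abs_le hΨ.aestronglyMeasurable hbd
  have hint₁ : ∀ (y : Euc d) (ρ : Measure (Euc d)), [IsProbabilityMeasure ρ] →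
      Integrable (fun x => Ψ (x, y)) ρ := fun y _ _ =>
    integrable_of_abs_le (hlip₁ y).continuous.aestronglyMeasurable fun _ => hbd _
  have hint₂ : ∀ (x : Euc d) (ρ : Measure (Euc d)), [IsProbabilityMeasure ρ] →
      Integrable (fun y => Ψ (x, y)) ρ := fun x _ _ =>
    integrable_of_abs_le (hlip₂ x).continuous.aestronglyMeasurable fun _ => hbd _
  have h₁ : (∫ q, Ψ q ∂(μ.prod μ)) - ∫ q, Ψ q ∂(ν.prod μ) ≤ blDist μ ν := by
    rw [integral_prod _ (hint _), integral_prod _ (hint _)]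
    exact le_blDist (lipschitzWith_integral (fun x => hint₂ x μ) (ae_of_all _ hlip₁))
      fun _ => abs_integral_le_of_abs_le fun _ => hbd _
  have h₂ : (∫ q, Ψ q ∂(ν.prod μ)) - ∫ q, Ψ q ∂(ν.prod ν) ≤ blDist μ ν := by
    rw [integral_prod_symm _ (hint _), integral_prod_symm _ (hint _)]
    exact le_blDist (lipschitzWith_integral (fun y => hint₁ y ν) (ae_of_all _ hlip₂))
      fun _ => abs_integral_le_of_abs_le fun _ => hbd _
  linarith

end BoundedLipschitz

section Crossover

variable {d : ℕ}

instance : IsProbabilityMeasure (stdGaussian d) :=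
  Measure.isProbabilityMeasure_map (MeasurableEquiv.toLp 2 (Fin d → ℝ)).measurable.aemeasurable

instance : IsProbabilityMeasure (unifCube d) :=
  haveI : IsProbabilityMeasure (volume.restrict (Icc (0:ℝ) 1)) := ⟨by simp [Real.volume_Icc]⟩
  Measure.isProbabilityMeasure_map (MeasurableEquiv.toLp 2 (Fin d → ℝ)).measurable.aemeasurable

lemma ae_mem_Icc_unifCube : ∀ᵐ γ ∂(unifCube d), ∀ i, γ i ∈ Icc (0:ℝ) 1 := by
  rw [unifCube, (MeasurableEquiv.toLp 2 (Fin d → ℝ)).measurableEmbedding.ae_map_iff, ae_all_iff]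
  exact fun i => Measure.tendsto_eval_ae_ae.eventually (ae_restrict_mem measurableSet_Icc)

lemma EuclideanSpace.dist_le_dist_of_forall {ι : Type*} [Fintype ι]
    {a b c e : EuclideanSpace ℝ ι}
    (h : ∀ i, dist (a i) (b i) ≤ dist (c i) (e i)) : dist a b ≤ dist c e := by
  rw [EuclideanSpace.dist_eq, EuclideanSpace.dist_eq]
  exact Real.sqrt_le_sqrt (Finset.sum_le_sum fun i _ => pow_le_pow_left₀ dist_nonneg (h i) 2)

lemma lipschitzWith_crossover_left {γ ξ xs : Euc d} {σ : ℝ} (hγ : ∀ i, γ i ∈ Icc (0:ℝ) 1) :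
    LipschitzWith 1 fun x => crossover γ ξ σ x xs :=
  LipschitzWith.of_dist_le_mul fun x x' => by
    rw [NNReal.coe_one, one_mul]
    refine EuclideanSpace.dist_le_dist_of_forall fun i => ?_
    have hdiff : crossover γ ξ σ x xs i - crossover γ ξ σ x' xs i = (1 - γ i) * (x i - x' i) := by
      simp only [crossover, PiLp.toLp_apply]; ring
    have hcoef : |1 - γ i| ≤ 1 := abs_le.2 ⟨by linarith [(hγ i).2], by linarith [(hγ i).1]⟩
    rw [Real.dist_eq, Real.dist_eq, hdiff, abs_mul]
    exact mul_le_of_le_one_left (abs_nonneg _) hcoef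

lemma lipschitzWith_crossover_right {γ ξ x : Euc d} {σ : ℝ} (hγ : ∀ i, γ i ∈ Icc (0:ℝ) 1) :
    LipschitzWith 1 fun xs => crossover γ ξ σ x xs :=
  LipschitzWith.of_dist_le_mul fun xs xs' => by
    rw [NNReal.coe_one, one_mul]
    refine EuclideanSpace.dist_le_dist_of_forall fun i => ?_
    have hdiff : crossover γ ξ σ x xs i - crossover γ ξ σ x xs' i = γ i * (xs i - xs' i) := by
      simp only [crossover, PiLp.toLp_apply]; ring
    have hcoef : |γ i| ≤ 1 := abs_le.2 ⟨by linarith [(hγ i).1], (hγ i).2⟩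
    rw [Real.dist_eq, Real.dist_eq, hdiff, abs_mul]
    exact mul_le_of_le_one_left (abs_nonneg _) hcoef

lemma continuous_crossover (σ : ℝ) :
    Continuous fun p : (Euc d × Euc d) × (Euc d × Euc d) =>
      crossover p.2.1 p.2.2 σ p.1.1 p.1.2 := by
  unfold crossover
  exact (PiLp.continuous_toLp 2 _).comp (continuous_pi fun i => by fun_prop)

def crossoverAvg (σ : ℝ) (φ : Euc d → ℝ) (q : Euc d × Euc d) : ℝ :=
  ∫ p, φ (crossover p.1 p.2 σ q.1 q.2) ∂((unifCube d).prod (stdGaussian d))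

variable {σ : ℝ} {φ : Euc d → ℝ}

lemma integrable_comp_crossover (hφ : Continuous φ) (hbd : ∀ x, |φ x| ≤ 1/2)
    (q : Euc d × Euc d) :
    Integrable (fun p : Euc d × Euc d => φ (crossover p.1 p.2 σ q.1 q.2))
      ((unifCube d).prod (stdGaussian d)) :=
  have hcont := hφ.comp ((continuous_crossover σ).comp (continuous_const.prodMk continuous_id))
  integrable_of_abs_le hcont.aestronglyMeasurable fun _ => hbd _

lemma abs_crossoverAvg_le (hbd : ∀ x, |φ x| ≤ 1/2) (q : Euc d × Euc d) :
    |crossoverAvg σ φ q| ≤ 1/2 :=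
  abs_integral_le_of_abs_le fun _ => hbd _

lemma lipschitzWith_crossoverAvg_left (hφ : LipschitzWith 1 φ) (hbd : ∀ x, |φ x| ≤ 1/2)
    (xs : Euc d) : LipschitzWith 1 fun x => crossoverAvg σ φ (x, xs) :=
  lipschitzWith_integral (fun x => integrable_comp_crossover hφ.continuous hbd (x, xs))
    (Measure.quasiMeasurePreserving_fst.ae ae_mem_Icc_unifCube |>.mono fun p hγ =>
      (hφ.comp (lipschitzWith_crossover_left (ξ := p.2) (σ := σ) (xs := xs) hγ)).weaken
        (mul_one 1).le)

lemma lipschitzWith_crossoverAvg_right (hφ : LipschitzWith 1 φ) (hbd : ∀ x, |φ x| ≤ 1/2)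
    (x : Euc d) : LipschitzWith 1 fun xs => crossoverAvg σ φ (x, xs) :=
  lipschitzWith_integral (fun xs => integrable_comp_crossover hφ.continuous hbd (x, xs))
    (Measure.quasiMeasurePreserving_fst.ae ae_mem_Icc_unifCube |>.mono fun p hγ =>
      (hφ.comp (lipschitzWith_crossover_right (ξ := p.2) (σ := σ) (x := x) hγ)).weaken
        (mul_one 1).le)

lemma integral_Qplus {F : Euc d → ℝ} {f : Measure (Euc d)} [IsFiniteMeasure (reweight F f)]
    (hφ : Continuous φ) (hbd : ∀ x, |φ x| ≤ 1/2) :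
    ∫ x, φ x ∂(Qplus F σ f) = ∫ q, crossoverAvg σ φ q ∂((reweight F f).prod (reweight F f)) :=
  (integral_map (continuous_crossover σ).measurable.aemeasurable hφ.aestronglyMeasurable).trans
    (integral_prod _ (integrable_of_abs_le
      (hφ.comp (continuous_crossover σ)).aestronglyMeasurable fun _ => hbd _))

lemma blDist_Qplus_le (F : Euc d → ℝ) (σ : ℝ) (f g : Measure (Euc d))
    [IsProbabilityMeasure (reweight F f)] [IsProbabilityMeasure (reweight F g)] :
    blDist (Qplus F σ f) (Qplus F σ g) ≤ 2 * blDist (reweight F f) (reweight F g) := by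
  refine blDist_le (mul_nonneg zero_le_two (blDist_nonneg _ _)) fun φ hφ hbd => ?_
  rw [integral_Qplus hφ.continuous hbd, integral_Qplus hφ.continuous hbd]
  exact integral_prod_self_sub_le_two_mul_blDist (abs_crossoverAvg_le hbd)
    (lipschitzWith_crossoverAvg_left hφ hbd) (lipschitzWith_crossoverAvg_right hφ hbd)

end Crossover

section Reweight

variable {d : ℕ} {F : Euc d → ℝ} {m M : ℝ}

lemma integral_reweight {f : Measure (Euc d)} (hF : Measurable F) (hF0 : ∀ x, 0 ≤ F x)
    (φ : Euc d → ℝ) :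
    ∫ x, φ x ∂(reweight F f) = (∫ x, F x * φ x ∂f) / ∫ x, F x ∂f := by
  have hc : 0 ≤ ∫ x, F x ∂f := integral_nonneg hF0
  rw [reweight, integral_withDensity_eq_integral_toReal_smul (hF.div_const _).ennreal_ofReal
    (ae_of_all _ fun _ => ENNReal.ofReal_lt_top), ← integral_div]
  congr 1 with x
  rw [ENNReal.toReal_ofReal (div_nonneg (hF0 x) hc), smul_eq_mul]
  ring

lemma isProbabilityMeasure_reweight {f : Measure (Euc d)} [IsProbabilityMeasure f]
    (hF : Measurable F) (hFmem : ∀ x, F x ∈ Icc m M) (hm : 0 < m) :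
    IsProbabilityMeasure (reweight F f) := by
  have hF0 : ∀ x, 0 ≤ F x := fun x => hm.le.trans (hFmem x).1
  have hc : 0 < ∫ x, F x ∂f := hm.trans_le (integral_mem_Icc_of_mem_Icc hF hFmem).1
  constructor
  rw [reweight, withDensity_apply _ MeasurableSet.univ, setLIntegral_univ,
    ← ofReal_integral_eq_lintegral_ofReal ((integrable_of_mem_Icc hF hFmem).div_const _)
      (ae_of_all _ fun x => div_nonneg (hF0 x) hc.le),
    integral_div, div_self hc.ne', ENNReal.ofReal_one]

lemma abs_integral_mul_sub_le_mul_blDist {K : ℝ≥0} (hF : LipschitzWith K F)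
    (hFM : ∀ x, |F x| ≤ M) (hM : 0 < M) {φ : Euc d → ℝ} (hφ : LipschitzWith 1 φ)
    (hbd : ∀ x, |φ x| ≤ 1/2) (f g : Measure (Euc d)) [IsProbabilityMeasure f]
    [IsProbabilityMeasure g] :
    |(∫ x, F x * φ x ∂f) - ∫ x, F x * φ x ∂g| ≤ (K / 2 + M) * blDist f g := by
  refine abs_integral_sub_le_mul_blDist (c := 0) (by positivity) (fun x y => ?_) fun x => ?_
  · have hFlip : |F x - F y| ≤ K * dist x y := hF.dist_le_mul x y
    have hφlip : |φ x - φ y| ≤ dist x y := by simpa [Real.dist_eq] using hφ.dist_le_mul x y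
    calc |F x * φ x - F y * φ y| = |φ x * (F x - F y) + F y * (φ x - φ y)| := by ring_nf
      _ ≤ |φ x| * |F x - F y| + |F y| * |φ x - φ y| := by
          simpa only [abs_mul] using abs_add_le (φ x * (F x - F y)) (F y * (φ x - φ y))
      _ ≤ 1 / 2 * (K * dist x y) + M * dist x y :=
          add_le_add (mul_le_mul (hbd x) hFlip (abs_nonneg _) (by norm_num))
            (mul_le_mul (hFM y) hφlip (abs_nonneg _) hM.le)
      _ = (K / 2 + M) * dist x y := by ring
  · rw [sub_zero, abs_mul]
    nlinarith [hbd x, hFM x, abs_nonneg (F x), abs_nonneg (φ x), NNReal.coe_nonneg K]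

lemma abs_integral_sub_le_mul_blDist_of_mem_Icc {K : ℝ≥0} (hF : LipschitzWith K F)
    (hFmem : ∀ x, F x ∈ Icc m M) (hm : 0 < m) (f g : Measure (Euc d)) [IsProbabilityMeasure f]
    [IsProbabilityMeasure g] :
    |(∫ x, F x ∂f) - ∫ x, F x ∂g| ≤ (K + M) * blDist f g := by
  have hM : 0 < M := hm.trans_le ((hFmem 0).1.trans (hFmem 0).2)
  refine abs_integral_sub_le_mul_blDist (c := (m + M) / 2) (by positivity)
    (fun x y => (hF.dist_le_mul x y).trans ?_) fun x => ?_
  · nlinarith [dist_nonneg (x := x) (y := y)]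
  · rw [abs_le]
    constructor <;> linarith [(hFmem x).1, (hFmem x).2, NNReal.coe_nonneg K]

lemma blDist_reweight_le {K : ℝ≥0} (hF : LipschitzWith K F) (hFmem : ∀ x, F x ∈ Icc m M)
    (hm : 0 < m) (f g : Measure (Euc d)) [IsProbabilityMeasure f] [IsProbabilityMeasure g] :
    blDist (reweight F f) (reweight F g) ≤ (1 / m) * (1 + M / m) * (K + 2 * M) * blDist f g := by
  have hM : 0 < M := hm.trans_le ((hFmem 0).1.trans (hFmem 0).2)
  have hF0 : ∀ x, 0 ≤ F x := fun x => hm.le.trans (hFmem x).1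
  have hFM : ∀ x, |F x| ≤ M := fun x => abs_le.2 ⟨by linarith [hF0 x], (hFmem x).2⟩
  have hβ := blDist_nonneg f g
  refine blDist_le (by positivity) fun φ hφ hbd => ?_
  have hmass_f := integral_mem_Icc_of_mem_Icc (μ := f) hF.continuous.measurable hFmem
  have hmass_g := integral_mem_Icc_of_mem_Icc (μ := g) hF.continuous.measurable hFmem
  have hB : |∫ x, F x * φ x ∂g| ≤ M / 2 := abs_integral_le_of_abs_le fun x => by
    rw [abs_mul]; nlinarith [hbd x, hFM x, abs_nonneg (F x), abs_nonneg (φ x)]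
  rw [integral_reweight hF.continuous.measurable hF0,
    integral_reweight hF.continuous.measurable hF0]
  calc _ ≤ |_| := le_abs_self _
    _ ≤ _ := abs_div_sub_div_le hm hmass_f.1 hmass_g.1 hmass_g.2 hB
    _ ≤ (M * ((K / 2 + M) * blDist f g) + M / 2 * ((K + M) * blDist f g)) / m ^ 2 := by
        gcongr
        exacts [abs_integral_mul_sub_le_mul_blDist hF hFM hM hφ hbd f g,
          abs_integral_sub_le_mul_blDist_of_mem_Icc hF hFmem hm f g]
    _ ≤ ((m + M) * (K + 2 * M) * blDist f g) / m ^ 2 := by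
        gcongr
        nlinarith [mul_nonneg (mul_nonneg hm.le (NNReal.coe_nonneg K)) hβ,
          mul_nonneg (mul_nonneg hm.le hM.le) hβ, mul_nonneg (mul_nonneg hM.le hM.le) hβ]
    _ = (1 / m) * (1 + M / m) * (K + 2 * M) * blDist f g := by
        field_simp

end Reweight

theorem gain_bl_stability_general (d : ℕ) (F : Euc d → ℝ) (L Fl Fu σ : ℝ)
    (hL : 0 ≤ L) (hFlip : ∀ x y, |F x - F y| ≤ L * dist x y)
    (hFmem : ∀ x, F x ∈ Set.Icc Fl Fu) (hFl : 0 < Fl)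
    (f g : Measure (Euc d))
    (hf : IsProbabilityMeasure f) (hg : IsProbabilityMeasure g) :
    blDist (Qplus F σ f) (Qplus F σ g) ≤ 2 * blDist (reweight F f) (reweight F g) ∧
    2 * blDist (reweight F f) (reweight F g) ≤
      2 * ((1 / Fl) * (1 + Fu / Fl) * (L + 2 * Fu)) * blDist f g := by
  have hF : LipschitzWith L.toNNReal F := .of_dist_le_mul fun x y => by
    rw [Real.coe_toNNReal L hL, Real.dist_eq]
    exact hFlip x y
  have := isProbabilityMeasure_reweight (f := f) hF.continuous.measurable hFmem hFl
  have := isProbabilityMeasure_reweight (f := g) hF.continuous.measurable hFmem hFl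
  refine ⟨blDist_Qplus_le F σ f g, ?_⟩
  have h := blDist_reweight_le hF hFmem hFl f g
  rw [Real.coe_toNNReal L hL] at h
  linarith

/-- **Lipschitz stability of the gain operator** in the BL norm:
`‖Q⁺(f,f) - Q⁺(g,g)‖_BL ≤ 2 ‖Ff/⟨F,f⟩ - Fg/⟨F,g⟩‖_BL ≤ 2 C_F ‖f-g‖_BL` with
`C_F = (1/F̲)(1 + F̄/F̲)(Lip(F) + 2F̄)`. -/
theorem gain_bl_stability (d : ℕ) (F : Euc d → ℝ) (L Fl Fu σ : ℝ)
    (hL : 0 ≤ L) (hFlip : ∀ x y, |F x - F y| ≤ L * dist x y)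
    (hFmem : ∀ x, F x ∈ Set.Icc Fl Fu) (hFl : 0 < Fl) (hFlu : Fl ≤ Fu) (hσ : 0 < σ)
    (f g : Measure (Euc d))
    (hf : IsProbabilityMeasure f) (hg : IsProbabilityMeasure g) :
    blDist (Qplus F σ f) (Qplus F σ g) ≤ 2 * blDist (reweight F f) (reweight F g) ∧
    2 * blDist (reweight F f) (reweight F g) ≤
      2 * ((1 / Fl) * (1 + Fu / Fl) * (L + 2 * Fu)) * blDist f g :=
  gain_bl_stability_general d F L Fl Fu σ hL hFlip hFmem hFl f g hf hg
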